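/- Let G be a finite simple graph and fix a vertex v of G. Let G^v be the graph obtained from G by adding one new vertex v' adjacent only to v, and let G − v denote the induced subgraph of G on V(G) ∖ {v}. Then: (1) P_{G^v}(x) = P_G(x) + x · P_{G−v}(x); (2) α(G^v) = max( α(G), 1 + α(G−v) ); and (3) setting a = M(G) and b = M(G−v), if a ≠ b then M(G^v) = min(a, b), while if a = b then M(G^v) ≥ a. -/

import Mathlib

attribute [local instance] Classical.propDecidable

/-- `s` is an independent set of vertices of `G`. -/
def IsIndep {V : Type*} (G : SimpleGraph V) (s : Finset V) : Prop :=
  ∀ v ∈ s, ∀ w ∈ s, ¬ G.Adj v w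

/-- The independence polynomial `P_G(x) = ∑ g_i x^i`. -/
noncomputable def indepPoly {V : Type*} [Fintype V] (G : SimpleGraph V) : Polynomial ℤ :=
  ∑ s ∈ Finset.univ.filter (fun s : Finset V => IsIndep G s), Polynomial.X ^ s.card

/-- The independence number `α(G)`. -/
noncomputable def indepNum {V : Type*} [Fintype V] (G : SimpleGraph V) : ℕ :=
  (Finset.univ.filter (fun s : Finset V => IsIndep G s)).sup Finset.card

/-- `M(G)`: the multiplicity of `x = -1` as a root of `P_G(x)`. -/
noncomputable def multM {V : Type*} [Fintype V] (G : SimpleGraph V) : ℕ :=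
  (indepPoly G).rootMultiplicity (-1)

/-- The defining relation of the one-vertex whiskering `G^v`: the edges of `G` together
with one pendant edge `{v, v'}`, where `v'` is the new vertex. -/
def W1Rel {V : Type*} (G : SimpleGraph V) (v : V) : (V ⊕ Unit) → (V ⊕ Unit) → Prop
  | Sum.inl a, Sum.inl b => G.Adj a b
  | Sum.inl a, Sum.inr _ => a = v
  | _, _ => False

/-- `G^v`: the graph obtained from `G` by whiskering the vertex `v`. -/
noncomputable def whiskerOne {V : Type*} (G : SimpleGraph V) (v : V) :
    SimpleGraph (V ⊕ Unit) :=
  SimpleGraph.fromRel (W1Rel G v)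

/-!
The independent sets of `G^v` split according to whether they contain the new leaf `v'`:
those that do not are exactly the independent sets of `G`, and those that do are `v'` together
with an independent set of `G - v`. Counting by size gives (1) and maximising the size gives (2).
For (3), `x` does not vanish at `-1`, so `M(G^v)` is the multiplicity of `-1` in a sum of two
polynomials with multiplicities `a` and `b`; this is `min a b` when `a ≠ b` and at least `a`
when `a = b`.
-/

open Polynomial Finset

namespace Polynomial

variable {R : Type*} [CommRing R] {p q : R[X]} {a : R}

lemma rootMultiplicity_add_of_lt (hp : p ≠ 0) (h : rootMultiplicity a p < rootMultiplicity a q) :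
    rootMultiplicity a (p + q) = rootMultiplicity a p := by
  have hq : q ≠ 0 := by rintro rfl; simp at h
  have hq_dvd : (X - C a) ^ (rootMultiplicity a p + 1) ∣ q := (le_rootMultiplicity_iff hq).1 h
  have hpq_ndvd : ¬(X - C a) ^ (rootMultiplicity a p + 1) ∣ p + q := fun hpq_dvd =>
    pow_rootMultiplicity_not_dvd hp a (by simpa using dvd_sub hpq_dvd hq_dvd)
  have hpq : p + q ≠ 0 := fun h0 => hpq_ndvd (h0 ▸ dvd_zero _)
  refine le_antisymm ((rootMultiplicity_le_iff hpq a _).2 hpq_ndvd) ?_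
  simpa [min_eq_left h.le] using rootMultiplicity_add a hpq

lemma rootMultiplicity_add_of_ne (hp : p ≠ 0) (hq : q ≠ 0)
    (h : rootMultiplicity a p ≠ rootMultiplicity a q) :
    rootMultiplicity a (p + q) = min (rootMultiplicity a p) (rootMultiplicity a q) := by
  rcases h.lt_or_gt with h | h
  · rw [rootMultiplicity_add_of_lt hp h, min_eq_left h.le]
  · rw [add_comm, rootMultiplicity_add_of_lt hq h, min_eq_right h.le]

lemma rootMultiplicity_X_mul [IsDomain R] (ha : a ≠ 0) :
    rootMultiplicity a (X * p) = rootMultiplicity a p := by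
  rcases eq_or_ne p 0 with rfl | hp
  · simp
  rw [rootMultiplicity_mul (mul_ne_zero X_ne_zero hp),
    rootMultiplicity_eq_zero (by simpa using ha), zero_add]

end Polynomial

namespace whiskerOne

variable {V : Type*} (G : SimpleGraph V) (v : V)

@[simp] lemma adj_inl_inl {a b : V} :
    (whiskerOne G v).Adj (.inl a) (.inl b) ↔ G.Adj a b := by
  simp only [whiskerOne, SimpleGraph.fromRel_adj, W1Rel]
  exact ⟨fun ⟨_, h⟩ => h.elim id G.adj_symm, fun h => ⟨by simpa using h.ne, .inl h⟩⟩

@[simp] lemma adj_inl_inr {a : V} {u : Unit} :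
    (whiskerOne G v).Adj (.inl a) (.inr u) ↔ a = v := by
  simp [whiskerOne, W1Rel]

@[simp] lemma adj_inr_inl {a : V} {u : Unit} :
    (whiskerOne G v).Adj (.inr u) (.inl a) ↔ a = v := by
  rw [SimpleGraph.adj_comm, adj_inl_inr]

lemma isIndep_map_inl {s : Finset V} :
    IsIndep (whiskerOne G v) (s.map .inl) ↔ IsIndep G s := by
  simp [IsIndep]

noncomputable def complEmb : ({v}ᶜ : Set V) ↪ V ⊕ Unit :=
  (Function.Embedding.subtype _).trans .inl

noncomputable def insertLeaf : Finset ({v}ᶜ : Set V) ↪ Finset (V ⊕ Unit) where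
  toFun t := insert (.inr ()) (t.map (complEmb v))
  inj' t₁ t₂ h := by
    have hnot : ∀ t : Finset ({v}ᶜ : Set V), Sum.inr () ∉ t.map (complEmb v) := by
      simp [complEmb]
    simpa [erase_insert (hnot _)] using congr_arg (·.erase (.inr ())) h

lemma insertLeaf_apply (t : Finset ({v}ᶜ : Set V)) :
    insertLeaf v t = insert (.inr ()) (t.map (complEmb v)) := rfl

lemma card_insertLeaf (t : Finset ({v}ᶜ : Set V)) : #(insertLeaf v t) = #t + 1 := by
  simp [insertLeaf_apply, complEmb]

lemma isIndep_insertLeaf {t : Finset ({v}ᶜ : Set V)} :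
    IsIndep (whiskerOne G v) (insertLeaf v t) ↔ IsIndep (G.induce {v}ᶜ) t := by
  simp only [IsIndep, insertLeaf_apply, mem_insert, mem_map]
  constructor
  · intro h a ha b hb hab
    exact h _ (.inr ⟨a, ha, rfl⟩) _ (.inr ⟨b, hb, rfl⟩) (by simpa [complEmb] using hab)
  · rintro h _ (rfl | ⟨a, ha, rfl⟩) _ (rfl | ⟨b, hb, rfl⟩)
    · simp
    · exact mt (adj_inr_inl G v).1 b.2
    · exact mt (adj_inl_inr G v).1 a.2
    · simpa [complEmb] using h a ha b hb

lemma disjoint_map_inl_map_insertLeaf (S : Finset (Finset V))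
    (T : Finset (Finset ({v}ᶜ : Set V))) :
    Disjoint (S.map (mapEmbedding .inl).toEmbedding) (T.map (insertLeaf v)) := by
  simp only [disjoint_left, mem_map, RelEmbedding.coe_toEmbedding, mapEmbedding_apply]
  rintro _ ⟨s, -, rfl⟩ ⟨t, -, h⟩
  have : Sum.inr () ∈ s.map .inl := h ▸ by simp [insertLeaf_apply]
  simp at this

end whiskerOne

open whiskerOne

section IndepSets

variable {V : Type*} [Fintype V] (G : SimpleGraph V)

noncomputable def indepSets : Finset (Finset V) := univ.filter (IsIndep G ·)

lemma mem_indepSets {s : Finset V} : s ∈ indepSets G ↔ IsIndep G s := by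
  simp [indepSets]

lemma empty_mem_indepSets : ∅ ∈ indepSets G := by
  simp [mem_indepSets, IsIndep]

lemma indepPoly_eq_sum : indepPoly G = ∑ s ∈ indepSets G, X ^ #s := rfl

lemma indepNum_eq_sup : indepNum G = (indepSets G).sup card := rfl

lemma indepPoly_ne_zero : indepPoly G ≠ 0 := by
  have h : (indepPoly G).eval 1 = #(indepSets G) := by
    simp [indepPoly_eq_sum, eval_finsetSum]
  intro h0
  rw [h0, eval_zero] at h
  exact card_ne_zero_of_mem (empty_mem_indepSets G) (by exact_mod_cast h.symm)

variable (v : V)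

lemma indepSets_whiskerOne :
    indepSets (whiskerOne G v) = (indepSets G).map (mapEmbedding .inl).toEmbedding ∪
      (indepSets (G.induce {v}ᶜ)).map (insertLeaf v) := by
  ext s
  simp only [mem_union, mem_map, mem_indepSets, RelEmbedding.coe_toEmbedding, mapEmbedding_apply]
  constructor
  · intro hs
    by_cases hu : Sum.inr () ∈ s
    · have hv : Sum.inl v ∉ s := fun hv => hs _ hv _ hu (by simp)
      have hs_eq : insertLeaf v (univ.filter fun w => .inl ↑w ∈ s) = s := by
        ext x
        rcases x with a | ⟨⟩
        · by_cases ha : a = v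
          · subst ha
            simp [insertLeaf_apply, complEmb, hv]
          · simp [insertLeaf_apply, complEmb, ha]
        · simp [insertLeaf_apply, hu]
      exact .inr ⟨_, (isIndep_insertLeaf G v).1 (by rwa [hs_eq]), hs_eq⟩
    · have hs_eq : s.toLeft.map .inl = s := by
        ext x
        rcases x with a | ⟨⟩ <;> simp [hu]
      exact .inl ⟨_, (isIndep_map_inl G v).1 (by rwa [hs_eq]), hs_eq⟩
  · rintro (⟨t, ht, rfl⟩ | ⟨t, ht, rfl⟩)
    exacts [(isIndep_map_inl G v).2 ht, (isIndep_insertLeaf G v).2 ht]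

lemma indepPoly_whiskerOne :
    indepPoly (whiskerOne G v) = indepPoly G + X * indepPoly (G.induce {v}ᶜ) := by
  rw [indepPoly_eq_sum, indepSets_whiskerOne, sum_union (disjoint_map_inl_map_insertLeaf v _ _),
    sum_map, sum_map, indepPoly_eq_sum, indepPoly_eq_sum, mul_sum]
  congr 1 <;> refine sum_congr rfl fun t _ => ?_
  · simp
  · simp [card_insertLeaf, pow_succ']

lemma indepNum_whiskerOne :
    indepNum (whiskerOne G v) = max (indepNum G) (1 + indepNum (G.induce {v}ᶜ)) := by
  rw [indepNum_eq_sup, indepSets_whiskerOne, sup_union, sup_map, sup_map, indepNum_eq_sup,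
    indepNum_eq_sup, Finset.add_sup ⟨_, empty_mem_indepSets _⟩]
  congr 1 <;> refine sup_congr rfl fun t _ => ?_
  · simp
  · simp [card_insertLeaf, add_comm]

end IndepSets

/-- For the one-vertex whiskering `G^v`:
(1) `P_{G^v}(x) = P_G(x) + x P_{G-v}(x)`;
(2) `α(G^v) = max(α(G), 1 + α(G-v))`;
(3) with `a = M(G)` and `b = M(G-v)`: if `a ≠ b` then `M(G^v) = min(a,b)`, and if
`a = b` then `M(G^v) ≥ a`. -/
theorem whiskerOne_invariants {V : Type*} [Fintype V] (G : SimpleGraph V) (v : V) :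
    indepPoly (whiskerOne G v)
        = indepPoly G + Polynomial.X * indepPoly (G.induce ({v}ᶜ : Set V))
      ∧ indepNum (whiskerOne G v)
          = max (indepNum G) (1 + indepNum (G.induce ({v}ᶜ : Set V)))
      ∧ (multM G ≠ multM (G.induce ({v}ᶜ : Set V)) →
          multM (whiskerOne G v) = min (multM G) (multM (G.induce ({v}ᶜ : Set V))))
      ∧ (multM G = multM (G.induce ({v}ᶜ : Set V)) →
          multM G ≤ multM (whiskerOne G v)) := by
  have hpoly := indepPoly_whiskerOne G v
  have hmult_X_mul : (X * indepPoly (G.induce {v}ᶜ)).rootMultiplicity (-1) =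
      multM (G.induce {v}ᶜ) := rootMultiplicity_X_mul (by norm_num)
  refine ⟨hpoly, indepNum_whiskerOne G v, fun hne => ?_, fun heq => ?_⟩
  · rw [multM, hpoly, rootMultiplicity_add_of_ne (indepPoly_ne_zero G)
      (mul_ne_zero X_ne_zero (indepPoly_ne_zero _)) (by rwa [hmult_X_mul]), hmult_X_mul]
    rfl
  · have hmin := rootMultiplicity_add (-1) (hpoly ▸ indepPoly_ne_zero (whiskerOne G v))
    rw [hmult_X_mul, ← heq, ← hpoly] at hmin
    exact (min_self _).ge.trans hmin
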